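/- arXiv:2207.01727 — 2 statements merged into one kernel-verified Lean document; each statement's English description precedes it below -/
import Mathlib

section
/- With the matrix A as above and p ∈ (0,1], α > 0, and s_N > 0, every eigenvalue of A has strictly negative real part, and hence A is invertible. -/
/-!
Off the diagonal, `A` is nonnegative, and the sum of row `k` is `-α ∑ⱼ wⱼ sⱼ` with weights
`wⱼ = p + (1 - p)·[k ≤ j] ≥ 0` and `w_N = 1`, hence at most `-α s_N < 0`. So `A` is strictly
diagonally dominant with negative diagonal, and Gershgorin's discs lie in the open left half-plane.
-/

open Finset

namespace Matrix

variable {n : Type*} [Fintype n] [DecidableEq n]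

theorem sum_abs_offDiag_lt_neg_diag_of_sum_row_neg {A : Matrix n n ℝ} {k : n}
    (hoff : ∀ j, j ≠ k → 0 ≤ A k j) (hrow : ∑ j, A k j < 0) :
    ∑ j ∈ univ.erase k, |A k j| < -A k k := by
  have habs : ∑ j ∈ univ.erase k, |A k j| = ∑ j ∈ univ.erase k, A k j :=
    sum_congr rfl fun j hj => abs_of_nonneg (hoff j (ne_of_mem_erase hj))
  rw [habs]
  linarith [add_sum_erase univ (A k) (mem_univ k)]

theorem exists_re_le_of_mem_spectrum {B : Matrix n n ℂ} {z : ℂ} (hz : z ∈ spectrum ℂ B) :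
    ∃ k, z.re ≤ (B k k).re + ∑ j ∈ univ.erase k, ‖B k j‖ := by
  rw [← spectrum_toLin', ← Module.End.hasEigenvalue_iff_mem_spectrum] at hz
  obtain ⟨k, hk⟩ := eigenvalue_mem_ball hz
  refine ⟨k, ?_⟩
  have hre : z.re - (B k k).re ≤ ‖z - B k k‖ := by
    simpa only [Complex.sub_re] using Complex.re_le_norm (z - B k k)
  rw [Metric.mem_closedBall, dist_eq_norm] at hk
  linarith

theorem re_neg_of_mem_spectrum_of_sum_abs_lt_neg_diag {A : Matrix n n ℝ}
    (hdom : ∀ k, ∑ j ∈ univ.erase k, |A k j| < -A k k) {z : ℂ}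
    (hz : z ∈ spectrum ℂ (A.map (Complex.ofReal ·))) : z.re < 0 := by
  obtain ⟨k, hk⟩ := exists_re_le_of_mem_spectrum hz
  simp only [map_apply, Complex.ofReal_re, Complex.norm_real, Real.norm_eq_abs] at hk
  linarith [hdom k]

theorem isUnit_of_sum_abs_lt_neg_diag {A : Matrix n n ℝ}
    (hdom : ∀ k, ∑ j ∈ univ.erase k, |A k j| < -A k k) : IsUnit A := by
  rw [isUnit_iff_isUnit_det, isUnit_iff_ne_zero]
  refine det_ne_zero_of_sum_row_lt_diag fun k => ?_
  have hdiag : A k k < 0 := by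
    linarith [hdom k, sum_nonneg fun j (_ : j ∈ univ.erase k) => abs_nonneg (A k j)]
  simpa only [Real.norm_eq_abs, abs_of_neg hdiag] using hdom k

end Matrix

section Hierarchy

variable {N : ℕ}

def hierarchyWeight (p : ℝ) (k j : Fin (N + 1)) : ℝ :=
  p + (1 - p) * if k ≤ j then 1 else 0

theorem hierarchyWeight_of_le {p : ℝ} {k j : Fin (N + 1)} (h : k ≤ j) :
    hierarchyWeight p k j = 1 := by
  simp [hierarchyWeight, h]

theorem hierarchyWeight_nonneg {p : ℝ} (hp : 0 ≤ p) (k j : Fin (N + 1)) :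
    0 ≤ hierarchyWeight p k j := by
  unfold hierarchyWeight
  split_ifs <;> linarith

theorem add_mul_sum_tail_eq_sum_hierarchyWeight_mul (p : ℝ) {c : Fin (N + 1) → ℝ}
    (hc : ∑ j, c j = 1) (k : Fin (N + 1)) :
    p + (1 - p) * ∑ j, (if k ≤ j then c j else 0) = ∑ j, hierarchyWeight p k j * c j := by
  calc p + (1 - p) * ∑ j, (if k ≤ j then c j else 0)
      = ∑ j, (p * c j + (1 - p) * if k ≤ j then c j else 0) := by
        rw [sum_add_distrib, ← mul_sum, ← mul_sum, hc, mul_one]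
    _ = ∑ j, hierarchyWeight p k j * c j := sum_congr rfl fun j _ => ?_
  unfold hierarchyWeight
  split_ifs <;> ring

variable {p α : ℝ} {g s S : Fin (N + 1) → ℝ} {A : Matrix (Fin (N + 1)) (Fin (N + 1)) ℝ}

theorem hierarchy_entry_eq
    (hdiag : ∀ i, A i i = (1 - α) * g i - (p + (1 - p) * S i))
    (hoff : ∀ i j, i ≠ j →
      A i j = (1 - α) * (p + (1 - p) * (if i ≤ j then (1:ℝ) else 0)) * g j) (k j : Fin (N + 1)) :
    A k j = (1 - α) * hierarchyWeight p k j * g j - if j = k then p + (1 - p) * S k else 0 := by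
  by_cases hjk : j = k
  · subst hjk
    rw [hdiag, if_pos rfl, hierarchyWeight_of_le le_rfl, mul_one]
  · rw [hoff k j (Ne.symm hjk), if_neg hjk, sub_zero, hierarchyWeight]

theorem hierarchy_sum_row_eq
    (hsum : ∑ j, (α * s j + (1 - α) * g j) = 1)
    (hS : ∀ i, S i = ∑ j, if i ≤ j then α * s j + (1 - α) * g j else 0)
    (hdiag : ∀ i, A i i = (1 - α) * g i - (p + (1 - p) * S i))
    (hoff : ∀ i j, i ≠ j →
      A i j = (1 - α) * (p + (1 - p) * (if i ≤ j then (1:ℝ) else 0)) * g j) (k : Fin (N + 1)) :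
    ∑ j, A k j = -(α * ∑ j, hierarchyWeight p k j * s j) := by
  rw [sum_congr rfl fun j _ => hierarchy_entry_eq hdiag hoff k j, sum_sub_distrib,
    sum_ite_eq', if_pos (mem_univ k), hS k, add_mul_sum_tail_eq_sum_hierarchyWeight_mul p hsum k,
    ← sum_sub_distrib, mul_sum, ← sum_neg_distrib]
  exact sum_congr rfl fun j _ => by ring

theorem hierarchy_offDiag_nonneg (hp : 0 ≤ p) (hα : α ≤ 1) (hg : ∀ j, 0 ≤ g j)
    (hoff : ∀ i j, i ≠ j →
      A i j = (1 - α) * (p + (1 - p) * (if i ≤ j then (1:ℝ) else 0)) * g j)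
    {k j : Fin (N + 1)} (hjk : j ≠ k) : 0 ≤ A k j := by
  rw [hoff k j (Ne.symm hjk)]
  exact mul_nonneg (mul_nonneg (sub_nonneg.2 hα) (hierarchyWeight_nonneg hp k j)) (hg j)

theorem hierarchyWeight_sum_mul_pos (hp : 0 ≤ p) (hs : ∀ j, 0 ≤ s j)
    (hsN : 0 < s (Fin.last N)) (k : Fin (N + 1)) : 0 < ∑ j, hierarchyWeight p k j * s j := by
  calc 0 < s (Fin.last N) := hsN
    _ = hierarchyWeight p k (Fin.last N) * s (Fin.last N) := by
        rw [hierarchyWeight_of_le (Fin.le_last k), one_mul]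
    _ ≤ ∑ j, hierarchyWeight p k j * s j :=
        single_le_sum (f := fun j => hierarchyWeight p k j * s j)
          (fun j _ => mul_nonneg (hierarchyWeight_nonneg hp k j) (hs j)) (mem_univ _)

end Hierarchy

/-- For `p ∈ (0,1]`, `α > 0`, `s_N > 0`, every eigenvalue of the hierarchy matrix `A`
has strictly negative real part, and hence `A` is invertible. -/
theorem hierarchy_matrix_stable (N : ℕ) (p α : ℝ) (hp : p ∈ Set.Ioc (0:ℝ) 1)
    (hα : α ∈ Set.Ioc (0:ℝ) 1)
    (g s : Fin (N + 1) → ℝ) (hg : ∀ j, 0 ≤ g j) (hs : ∀ j, 0 ≤ s j)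
    (hsN : 0 < s (Fin.last N))
    (hsum : ∑ j, (α * s j + (1 - α) * g j) = 1)
    (S : Fin (N + 1) → ℝ)
    (hS : ∀ i, S i = ∑ j, if i ≤ j then α * s j + (1 - α) * g j else 0)
    (A : Matrix (Fin (N + 1)) (Fin (N + 1)) ℝ)
    (hdiag : ∀ i, A i i = (1 - α) * g i - (p + (1 - p) * S i))
    (hoff : ∀ i j, i ≠ j →
      A i j = (1 - α) * (p + (1 - p) * (if i ≤ j then (1:ℝ) else 0)) * g j) :
    (∀ z ∈ spectrum ℂ (A.map (Complex.ofReal ·)), z.re < 0) ∧ IsUnit A := by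
  have hdom : ∀ k, ∑ j ∈ univ.erase k, |A k j| < -A k k := fun k =>
    Matrix.sum_abs_offDiag_lt_neg_diag_of_sum_row_neg
      (fun _ hjk => hierarchy_offDiag_nonneg hp.1.le hα.2 hg hoff hjk)
      (by
        rw [hierarchy_sum_row_eq hsum hS hdiag hoff k, neg_lt_zero]
        exact mul_pos hα.1 (hierarchyWeight_sum_mul_pos hp.1.le hs hsN k))
  exact ⟨fun _ hz => Matrix.re_neg_of_mem_spectrum_of_sum_abs_lt_neg_diag hdom hz,
    Matrix.isUnit_of_sum_abs_lt_neg_diag hdom⟩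
end

section
/- Let A be an upper triangular N×N real matrix with A_{NN} = 0 and A_{ii} < 0 for i < N, and let B ∈ ℝ^N with B_N = 0. Then any solution X of X' = AX + B satisfies: X_N(t) = X_N(0) for all t, and for each i < N, X_i(t) converges as t → ∞ to the value m_i determined recursively by m_N = X_N(0) and m_i = (∑_{j>i} A_{ij} m_j + B_i)/(-A_{ii}). -/
/-!
The last row of `A` and `B_N` vanish, so `X_N` is constant. For `i < N` the `i`-th equation reads
`X_i' = A_ii X_i + f_i(t)` with a forcing `f_i` built from the higher components only, so by
downward induction `f_i` converges. A scalar equation `y' = a y + g` with `a < 0` and `g → c`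
has `y → c / -a`, by comparing `y` with Grönwall bounds from above and from below.
-/

open Filter Finset

theorem le_gronwallBound_of_hasDerivAt {y y' : ℝ → ℝ} {K ε T : ℝ}
    (hy : ∀ t ≥ T, HasDerivAt y (y' t) t) (bound : ∀ t ≥ T, y' t ≤ K * y t + ε) :
    ∀ t ≥ T, y t ≤ gronwallBound (y T) K ε (t - T) := fun t ht =>
  le_gronwallBound_of_liminf_deriv_right_le (a := T) (b := t)
    (fun s hs => (hy s hs.1).continuousAt.continuousWithinAt)
    (fun s hs _ hr => (hy s hs.1).hasDerivWithinAt.liminf_right_slope_le hr) le_rfl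
    (fun s hs => bound s hs.1) t ⟨ht, le_rfl⟩

theorem tendsto_gronwallBound_atTop_of_neg {δ K ε : ℝ} (hK : K < 0) :
    Tendsto (gronwallBound δ K ε) atTop (nhds (ε / -K)) := by
  have hexp : Tendsto (fun x => Real.exp (K * x)) atTop (nhds 0) :=
    Real.tendsto_exp_atBot.comp (tendsto_id.const_mul_atTop_of_neg hK)
  rw [gronwallBound_of_K_ne_0 hK.ne]
  convert (hexp.const_mul δ).add ((hexp.sub_const 1).const_mul (ε / K)) using 2
  rw [div_neg]; ring

/-- `y` is eventually below the solution of `z' = a z + b` for some `b > c`, which tends to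
`b / -a < u`. -/
theorem eventually_lt_of_hasDerivAt_linear {y g : ℝ → ℝ} {a c u : ℝ} (ha : a < 0)
    (hy : ∀ᶠ t in atTop, HasDerivAt y (a * y t + g t) t) (hg : Tendsto g atTop (nhds c))
    (hu : c / -a < u) : ∀ᶠ t in atTop, y t < u := by
  obtain ⟨v, hcv, hvu⟩ := exists_between hu
  have hna : 0 < -a := neg_pos.2 ha
  have hcb : c < v * -a := (div_lt_iff₀ hna).1 hcv
  obtain ⟨T, hT⟩ := eventually_atTop.1 (hy.and (hg.eventually (gt_mem_nhds hcb)))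
  have hbound := le_gronwallBound_of_hasDerivAt (K := a) (ε := v * -a) (fun t ht => (hT t ht).1)
    (fun t ht => by linarith [(hT t ht).2])
  have hlim : Tendsto (fun t => gronwallBound (y T) a (v * -a) (t - T)) atTop (nhds v) := by
    have := (tendsto_gronwallBound_atTop_of_neg (δ := y T) (ε := v * -a) ha).comp
      (tendsto_atTop_add_const_right _ (-T) tendsto_id)
    rwa [mul_div_cancel_right₀ _ hna.ne'] at this
  filter_upwards [hlim.eventually (gt_mem_nhds hvu), eventually_ge_atTop T] with t hlt hTt
  exact (hbound t hTt).trans_lt hlt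

theorem tendsto_of_hasDerivAt_linear {y g : ℝ → ℝ} {a c : ℝ} (ha : a < 0)
    (hy : ∀ᶠ t in atTop, HasDerivAt y (a * y t + g t) t) (hg : Tendsto g atTop (nhds c)) :
    Tendsto y atTop (nhds (c / -a)) := by
  refine tendsto_order.2
    ⟨fun l hl => ?_, fun u hu => eventually_lt_of_hasDerivAt_linear ha hy hg hu⟩
  have hneg : ∀ᶠ t in atTop, HasDerivAt (-y) (a * (-y) t + (-g) t) t :=
    hy.mono fun t ht => by simpa only [Pi.neg_apply, mul_neg, neg_add] using ht.neg
  filter_upwards [eventually_lt_of_hasDerivAt_linear ha hneg hg.neg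
    (by rw [neg_div]; exact neg_lt_neg hl)] with t ht
  exact lt_of_neg_lt_neg ht

theorem Matrix.BlockTriangular.mulVec_apply_eq_diag_add_sum {n R : Type*} [Fintype n]
    [LinearOrder n] [NonUnitalNonAssocSemiring R] {A : Matrix n n R} (hA : A.BlockTriangular id)
    (v : n → R) (i : n) :
    A.mulVec v i = A i i * v i + ∑ j, if i < j then A i j * v j else 0 := by
  simp only [Matrix.mulVec, dotProduct]
  rw [← Finset.add_sum_erase _ _ (mem_univ i),
    ← Finset.sum_erase univ (a := i) (f := fun j => if i < j then A i j * v j else 0) (by simp)]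
  congr 1
  refine Finset.sum_congr rfl fun j hj => ?_
  rcases (ne_of_mem_erase hj).lt_or_gt with hji | hij
  · rw [hA hji, zero_mul, if_neg hji.not_gt]
  · rw [if_pos hij]

/-- Upper triangular system with `A_{NN} = 0`, `A_{ii} < 0` for `i < N` and `B_N = 0`:
the top component is conserved and the lower components converge to the recursively
defined values `m_i`. -/
theorem upper_triangular_limit (N : ℕ) (A : Matrix (Fin (N + 1)) (Fin (N + 1)) ℝ)
    (htri : ∀ i j, j < i → A i j = 0)
    (htop : A (Fin.last N) (Fin.last N) = 0)
    (hdiag : ∀ i, i ≠ Fin.last N → A i i < 0)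
    (B : Fin (N + 1) → ℝ) (hB : B (Fin.last N) = 0)
    (X : ℝ → Fin (N + 1) → ℝ)
    (hX : ∀ t : ℝ, 0 ≤ t → HasDerivAt X (A.mulVec (X t) + B) t)
    (m : Fin (N + 1) → ℝ)
    (hmN : m (Fin.last N) = X 0 (Fin.last N))
    (hm : ∀ i, i ≠ Fin.last N →
      m i = ((∑ j, if i < j then A i j * m j else 0) + B i) / (-A i i)) :
    (∀ t : ℝ, 0 ≤ t → X t (Fin.last N) = X 0 (Fin.last N)) ∧
      ∀ i, i ≠ Fin.last N → Tendsto (fun t => X t i) atTop (nhds (m i)) := by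
  have hA : A.BlockTriangular id := fun i j h => htri i j h
  have hXi : ∀ i t, 0 ≤ t → HasDerivAt (fun s => X s i)
      (A i i * X t i + ((∑ j, if i < j then A i j * X t j else 0) + B i)) t := fun i t ht => by
    rw [← add_assoc, ← hA.mulVec_apply_eq_diag_add_sum]
    exact hasDerivAt_pi.1 (hX t ht) i
  have hconst : ∀ t : ℝ, 0 ≤ t → X t (Fin.last N) = X 0 (Fin.last N) := by
    have hzero : ∀ s, 0 ≤ s → HasDerivAt (fun r => X r (Fin.last N)) 0 s := fun s hs => by
      simpa [htop, hB, fun j => not_lt.2 (Fin.le_last j)] using hXi (Fin.last N) s hs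
    exact fun t ht => constant_of_has_deriv_right_zero
      (fun s hs => (hzero s hs.1).continuousAt.continuousWithinAt)
      (fun s hs => (hzero s hs.1).hasDerivWithinAt) t ⟨ht, le_rfl⟩
  have hlim : ∀ i, Tendsto (fun t => X t i) atTop (nhds (m i)) := by
    intro i
    induction i using WellFoundedGT.induction with
    | _ i ih =>
    by_cases hi : i = Fin.last N
    · subst hi
      rw [hmN]
      exact tendsto_const_nhds.congr' ((eventually_ge_atTop 0).mono fun t ht => (hconst t ht).symm)
    · have hforcing : Tendsto (fun t => (∑ j, if i < j then A i j * X t j else 0) + B i) atTop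
          (nhds ((∑ j, if i < j then A i j * m j else 0) + B i)) := by
        refine (tendsto_finsetSum _ fun j _ => ?_).add_const _
        split_ifs with hij
        exacts [(ih j hij).const_mul _, tendsto_const_nhds]
      rw [hm i hi]
      exact tendsto_of_hasDerivAt_linear (hdiag i hi)
        ((eventually_ge_atTop 0).mono fun t => hXi i t) hforcing
  exact ⟨hconst, fun i _ => hlim i⟩
end
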